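/- Let μ be a probability measure on ℝ with μ ≠ δ_0, and define the η-transform η_μ(z) = 1 − z/G_μ(1/z) for z in the upper half-plane H, where G_μ is the Cauchy transform. Then for every z ∈ H one has 0 < arg z ≤ arg η_μ(z) ≤ arg z + π; in particular η_μ(H) ⊆ ℂ \ [0, ∞). -/

import Mathlib

open MeasureTheory Complex

/-- The Cauchy transform `G_μ(z) = ∫ 1/(z − x) dμ(x)` of a measure on `ℝ`. -/
noncomputable def cauchyTransform (μ : Measure ℝ) (z : ℂ) : ℂ :=
  ∫ x, (z - (x : ℂ))⁻¹ ∂μ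

/-- The η-transform `η_μ(z) = 1 − z / G_μ(1/z)`. -/
noncomputable def etaTransform (μ : Measure ℝ) (z : ℂ) : ℂ :=
  1 - z / cauchyTransform μ z⁻¹

/-- The argument of a complex number normalized to lie in `[0, 2π)`. -/
noncomputable def posArg (z : ℂ) : ℝ :=
  if Complex.arg z < 0 then Complex.arg z + 2 * Real.pi else Complex.arg z

/-! Put `w = z⁻¹`, which lies in the lower half-plane, so that `η_μ(z) = z · (w − F_μ(w))` with
`F_μ = 1 / G_μ`. Since `Im G_μ(w) = −Im w · ∫ |w − x|⁻² dμ` and, by the variance inequality,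
`|G_μ(w)|² ≤ ∫ |w − x|⁻² dμ`, one gets `Im F_μ(w) ≤ Im w`: the factor `q = w − F_μ(w)` lies in
the closed upper half-plane. It is nonzero, since equality in the variance inequality makes
`(w − x)⁻¹` a.e. constant, and `G_μ(w) = w⁻¹` then forces `μ = δ₀`. Multiplying `z` by `q` adds
`arg q ∈ [0, π]` to `arg z ∈ (0, π)` without wrapping around. -/

open scoped RealInnerProductSpace

section Variance

variable {α E : Type*} [MeasurableSpace α] {μ : Measure α} [IsProbabilityMeasure μ]
  [NormedAddCommGroup E] [InnerProductSpace ℝ E] [CompleteSpace E] {f : α → E}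

theorem integral_sq_norm_sub_integral (hf : MemLp f 2 μ) :
    ∫ x, ‖f x - ∫ y, f y ∂μ‖ ^ 2 ∂μ = ∫ x, ‖f x‖ ^ 2 ∂μ - ‖∫ x, f x ∂μ‖ ^ 2 := by
  set m := ∫ y, f y ∂μ
  have hf1 : Integrable f μ := hf.integrable one_le_two
  have hf2 : Integrable (fun x => ‖f x‖ ^ 2) μ := hf.integrable_norm_pow two_ne_zero
  have hinner : Integrable (fun x => 2 * ⟪f x, m⟫) μ := (hf1.inner_const m).const_mul 2
  have hmean : ∫ x, ⟪f x, m⟫ ∂μ = ‖m‖ ^ 2 := by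
    simp_rw [real_inner_comm m]
    rw [integral_inner hf1, real_inner_self_eq_norm_sq]
  simp_rw [norm_sub_sq_real]
  rw [integral_add (by exact hf2.sub hinner) (integrable_const _), integral_sub hf2 hinner,
    integral_const_mul, hmean, integral_const]
  simp only [probReal_univ, one_smul]
  ring

theorem sq_norm_integral_le_integral_sq_norm (hf : MemLp f 2 μ) :
    ‖∫ x, f x ∂μ‖ ^ 2 ≤ ∫ x, ‖f x‖ ^ 2 ∂μ := by
  have := integral_sq_norm_sub_integral hf ▸ integral_nonneg fun x => by positivity
  linarith

theorem ae_eq_integral_of_integral_sq_norm_eq (hf : MemLp f 2 μ)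
    (h : ∫ x, ‖f x‖ ^ 2 ∂μ = ‖∫ x, f x ∂μ‖ ^ 2) : ∀ᵐ x ∂μ, f x = ∫ y, f y ∂μ := by
  have hvar := integral_sq_norm_sub_integral hf
  have hint : Integrable (fun x => ‖f x - ∫ y, f y ∂μ‖ ^ 2) μ :=
    (hf.sub (memLp_const _)).integrable_norm_pow two_ne_zero
  rw [h, sub_self, integral_eq_zero_iff_of_nonneg (fun x => by positivity) hint] at hvar
  filter_upwards [hvar] with x hx
  simpa [sub_eq_zero] using hx

end Variance

theorem Complex.inv_im_eq_neg_im_mul_sq_norm (z : ℂ) : z⁻¹.im = -z.im * ‖z⁻¹‖ ^ 2 := by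
  rw [inv_im, norm_inv, inv_pow, ← normSq_eq_norm_sq, div_eq_mul_inv]

section CauchyTransform

variable (μ : Measure ℝ) {w : ℂ}

theorem sub_ofReal_ne_zero (hw : w.im ≠ 0) (x : ℝ) : w - x ≠ 0 :=
  fun h => hw (by simpa using congrArg im h)

theorem norm_inv_sub_ofReal_le (hw : w.im ≠ 0) (x : ℝ) : ‖(w - x)⁻¹‖ ≤ |w.im|⁻¹ := by
  have him : |w.im| ≤ ‖w - x‖ := by
    simpa using abs_im_le_norm (w - x)
  rw [norm_inv]
  exact inv_anti₀ (abs_pos.2 hw) him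

theorem memLp_inv_sub_ofReal [IsFiniteMeasure μ] (hw : w.im ≠ 0) (p : ENNReal) :
    MemLp (fun x : ℝ => (w - x)⁻¹) p μ :=
  .of_bound
    ((continuous_const.sub continuous_ofReal).inv₀ (sub_ofReal_ne_zero hw)).aestronglyMeasurable _
    (.of_forall (norm_inv_sub_ofReal_le hw))

theorem im_cauchyTransform [IsFiniteMeasure μ] (hw : w.im ≠ 0) :
    (cauchyTransform μ w).im = -w.im * ∫ x, ‖(w - x)⁻¹‖ ^ 2 ∂μ := by
  rw [cauchyTransform, ← integral_const_mul, ← RCLike.im_to_complex,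
    ← integral_im ((memLp_inv_sub_ofReal μ hw 1).integrable le_rfl)]
  simp only [RCLike.im_to_complex, inv_im_eq_neg_im_mul_sq_norm, sub_im, ofReal_im, sub_zero]

theorem im_inv_cauchyTransform [IsFiniteMeasure μ] (hw : w.im ≠ 0) :
    (cauchyTransform μ w)⁻¹.im = w.im * (∫ x, ‖(w - x)⁻¹‖ ^ 2 ∂μ) / ‖cauchyTransform μ w‖ ^ 2 := by
  rw [inv_im, im_cauchyTransform μ hw, normSq_eq_norm_sq]
  ring

variable [IsProbabilityMeasure μ]

theorem im_inv_cauchyTransform_le (hw : w.im < 0) : (cauchyTransform μ w)⁻¹.im ≤ w.im := by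
  have hLp := memLp_inv_sub_ofReal μ hw.ne 2
  set D := ∫ x, ‖(w - x)⁻¹‖ ^ 2 ∂μ
  have hD : 0 < D := by
    rw [integral_pos_iff_support_of_nonneg (fun x => by positivity)
      (hLp.integrable_norm_pow two_ne_zero)]
    simp [Function.support, sub_ofReal_ne_zero hw.ne]
  have hG : 0 < ‖cauchyTransform μ w‖ := by
    refine norm_pos_iff.2 fun h => ?_
    have := im_cauchyTransform μ hw.ne
    rw [h, zero_im] at this
    nlinarith
  have hJensen : ‖cauchyTransform μ w‖ ^ 2 ≤ D := sq_norm_integral_le_integral_sq_norm hLp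
  rw [im_inv_cauchyTransform μ hw.ne, div_le_iff₀ (by positivity)]
  nlinarith

theorem cauchyTransform_ne_inv (hμ : μ ≠ Measure.dirac 0) (hw : w.im ≠ 0) :
    cauchyTransform μ w ≠ w⁻¹ := by
  intro hG
  have hw0 : w ≠ 0 := fun h => hw (by simp [h])
  have hD : ∫ x, ‖(w - x)⁻¹‖ ^ 2 ∂μ = ‖cauchyTransform μ w‖ ^ 2 := by
    have hN : ‖cauchyTransform μ w‖ ^ 2 ≠ 0 := by rw [hG]; simpa using hw0
    have h : (cauchyTransform μ w)⁻¹.im = w.im := by rw [hG, inv_inv]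
    rw [im_inv_cauchyTransform μ hw, div_eq_iff hN] at h
    exact mul_left_cancel₀ hw h
  have hae : ∀ᵐ x ∂μ, id x = (0 : ℝ) := by
    filter_upwards
      [ae_eq_integral_of_integral_sq_norm_eq (memLp_inv_sub_ofReal μ hw 2) hD] with x hx
    rw [← cauchyTransform, hG, inv_inj, sub_eq_self, ofReal_eq_zero] at hx
    exact hx
  exact hμ (by simpa using (ProbabilityTheory.hasLaw_dirac_of_ae_eq hae).map_eq)

end CauchyTransform

theorem etaTransform_eq_mul (μ : Measure ℝ) {z : ℂ} (hz : z ≠ 0) :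
    etaTransform μ z = z * (z⁻¹ - (cauchyTransform μ z⁻¹)⁻¹) := by
  rw [etaTransform, mul_sub, mul_inv_cancel₀ hz, div_eq_mul_inv]

section PosArg

theorem posArg_eq_toIcoMod (z : ℂ) : posArg z = toIcoMod Real.two_pi_pos 0 (arg z) := by
  unfold posArg
  split_ifs with h
  · rw [← toIcoMod_add_right, eq_comm, toIcoMod_eq_self]
    constructor <;> linarith [neg_pi_lt_arg z]
  · rw [eq_comm, toIcoMod_eq_self]
    constructor <;> linarith [arg_le_pi z, Real.pi_pos]

theorem posArg_mem_Ico (z : ℂ) : posArg z ∈ Set.Ico 0 (2 * Real.pi) := by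
  simpa [posArg_eq_toIcoMod] using toIcoMod_mem_Ico Real.two_pi_pos 0 (arg z)

theorem coe_posArg (z : ℂ) : (posArg z : Real.Angle) = arg z := by
  unfold posArg
  split_ifs
  · rw [Real.Angle.coe_add, Real.Angle.coe_two_pi, add_zero]
  · rfl

theorem posArg_of_im_nonneg {z : ℂ} (hz : 0 ≤ z.im) : posArg z = arg z :=
  if_neg (not_lt.2 (arg_nonneg_iff.2 hz))

theorem posArg_mul {z q : ℂ} (hz : z ≠ 0) (hq : q ≠ 0) (h : posArg z + posArg q < 2 * Real.pi) :
    posArg (z * q) = posArg z + posArg q := by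
  have hsum : posArg z + posArg q ∈ Set.Ico 0 (2 * Real.pi) :=
    ⟨add_nonneg (posArg_mem_Ico z).1 (posArg_mem_Ico q).1, h⟩
  have hcoe : ((posArg z + posArg q : ℝ) : Real.Angle) = arg (z * q) := by
    rw [Real.Angle.coe_add, coe_posArg, coe_posArg, arg_mul_coe_angle hz hq]
  obtain ⟨k, hk⟩ := Real.Angle.angle_eq_iff_two_pi_dvd_sub.1 hcoe
  calc posArg (z * q) = toIcoMod Real.two_pi_pos 0 (arg (z * q)) := posArg_eq_toIcoMod _
    _ = toIcoMod Real.two_pi_pos 0 (posArg z + posArg q) :=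
      (toIcoMod_eq_toIcoMod _).2 ⟨k, by rw [hk, zsmul_eq_mul]; ring⟩
    _ = posArg z + posArg q := (toIcoMod_eq_self _).2 (by simpa using hsum)

theorem posArg_mem_Ioo_of_im_pos {z : ℂ} (hz : 0 < z.im) : posArg z ∈ Set.Ioo 0 Real.pi := by
  rw [posArg_of_im_nonneg hz.le]
  exact ⟨(arg_nonneg_iff.2 hz.le).lt_of_ne fun h => hz.ne' (arg_eq_zero_iff.1 h.symm).2,
    arg_lt_pi_iff.2 (.inr hz.ne')⟩

theorem posArg_eq_zero_of_re_nonneg_of_im_eq_zero {z : ℂ} (hre : 0 ≤ z.re) (him : z.im = 0) :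
    posArg z = 0 := by
  rw [posArg_of_im_nonneg him.ge, arg_eq_zero_iff]
  exact ⟨hre, him⟩

end PosArg

/-- For a probability measure `μ ≠ δ_0` on `ℝ` and any `z` in the upper half-plane,
`0 < arg z ≤ arg η_μ(z) ≤ arg z + π` (arguments normalized in `[0, 2π)`); in particular
`η_μ(z)` avoids the nonnegative real half-line `[0, ∞)`. -/
theorem arg_etaTransform_bounds (μ : Measure ℝ) [IsProbabilityMeasure μ]
    (hμ : μ ≠ Measure.dirac 0) :
    ∀ z : ℂ, 0 < z.im →
      (0 < posArg z ∧ posArg z ≤ posArg (etaTransform μ z) ∧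
        posArg (etaTransform μ z) ≤ posArg z + Real.pi) ∧
      etaTransform μ z ∉ {w : ℂ | w.im = 0 ∧ 0 ≤ w.re} := by
  intro z hz
  have hz0 : z ≠ 0 := fun h => by simp [h] at hz
  have hw : z⁻¹.im < 0 := by
    rw [inv_im]
    exact div_neg_of_neg_of_pos (neg_neg_of_pos hz) (normSq_pos.2 hz0)
  set q := z⁻¹ - (cauchyTransform μ z⁻¹)⁻¹
  have hq : 0 ≤ q.im := sub_nonneg.2 (im_inv_cauchyTransform_le μ hw)
  have hq0 : q ≠ 0 := sub_ne_zero.2 fun h =>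
    cauchyTransform_ne_inv μ hμ hw.ne (inv_eq_iff_eq_inv.1 h.symm)
  obtain ⟨hargz, hargz_lt⟩ := posArg_mem_Ioo_of_im_pos hz
  have hargq : posArg q ≤ Real.pi := posArg_of_im_nonneg hq ▸ arg_le_pi q
  have hη : posArg (etaTransform μ z) = posArg z + posArg q := by
    rw [etaTransform_eq_mul μ hz0]
    exact posArg_mul hz0 hq0 (by linarith)
  have hargq_nonneg := (posArg_mem_Ico q).1
  refine ⟨⟨hargz, by linarith, by linarith⟩, fun ⟨him, hre⟩ => ?_⟩
  linarith [posArg_eq_zero_of_re_nonneg_of_im_eq_zero hre him]
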